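/- arXiv:1307.6949 — 6 statements merged into one kernel-verified Lean document; each statement's English description precedes it below -/
import Mathlib

section
/- Let f(t) = t · (log(t+1))^δ with δ > 2 on [0, ∞). Then f satisfies the Keller–Osserman condition, i.e., f(0) = 0, f(t) > 0 for t > 0, f is non-decreasing, and ∫_1^∞ (∫_0^s f(t) dt)^{−1/2} ds < ∞. -/
open Real MeasureTheory Set Filter

/-! Since `f` is increasing, `∫₀ˢ f ≥ (s/2) f(s/2) ≥ (s/2)² (log (s+1) / 2)^δ`, the last step
because `(s/2 + 1)² ≥ s + 1`. Hence `(∫₀ˢ f)^(-1/2) ≲ log (s+1)^(-δ/2) / (s+1)`, which is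
integrable at infinity as `δ/2 > 1`: it is the derivative of `log (s+1)^(1-δ/2) / (1-δ/2)`,
which tends to `0`. Measurability of the integrand comes for free from the monotonicity of
`s ↦ ∫₀ˢ f`. -/

theorem MonotoneOn.sub_mul_le_intervalIntegral {f : ℝ → ℝ} {a b c : ℝ}
    (hf : MonotoneOn f (Icc a b)) (hfa : 0 ≤ f a) (hac : a ≤ c) (hcb : c ≤ b) :
    (b - c) * f c ≤ ∫ t in a..b, f t := by
  have hint : ∀ {x y}, a ≤ x → x ≤ y → y ≤ b → IntervalIntegrable f volume x y :=
    fun hx hxy hy => (hf.mono (uIcc_of_le hxy ▸ Icc_subset_Icc hx hy)).intervalIntegrable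
  have hc : c ∈ Icc a b := ⟨hac, hcb⟩
  have head : 0 ≤ ∫ t in a..c, f t := intervalIntegral.integral_nonneg hac
    fun t ht => hfa.trans (hf (left_mem_Icc.2 (hac.trans hcb)) ⟨ht.1, ht.2.trans hcb⟩ ht.1)
  have tail : ∫ _ in c..b, f c ≤ ∫ t in c..b, f t :=
    intervalIntegral.integral_mono_on hcb intervalIntegrable_const (hint hac hcb le_rfl)
      fun t ht => hf hc ⟨hac.trans ht.1, ht.2⟩ ht.1
  rw [intervalIntegral.integral_const, smul_eq_mul] at tail
  rw [← intervalIntegral.integral_add_adjacent_intervals (hint le_rfl hac hcb)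
    (hint hac hcb le_rfl)]
  linarith

theorem MonotoneOn.monotoneOn_intervalIntegral {f : ℝ → ℝ} {a : ℝ}
    (hf : MonotoneOn f (Ici a)) (hfa : 0 ≤ f a) :
    MonotoneOn (fun s => ∫ t in a..s, f t) (Ici a) := fun x hx y hy hxy =>
  intervalIntegral.integral_mono_interval le_rfl hx hxy
    ((ae_restrict_mem measurableSet_Ioc).mono fun t ht =>
      hfa.trans (hf self_mem_Ici (le_of_lt ht.1) (le_of_lt ht.1)))
    (hf.mono (by simpa [uIcc_of_le (show a ≤ y from hy)] using
      Icc_subset_Ici_self)).intervalIntegrable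

theorem Real.log_add_one_le_two_mul_log_half_add_one {s : ℝ} (hs : -1 < s) :
    log (s + 1) ≤ 2 * log (s / 2 + 1) := by
  rw [← log_rpow (by linarith), rpow_two]
  exact log_le_log (by linarith) (by nlinarith [sq_nonneg s])

theorem hasDerivAt_log_add_one_rpow_div {p x : ℝ} (hp : p ≠ 1) (hx : 0 < x) :
    HasDerivAt (fun y => log (y + 1) ^ (1 - p) / (1 - p)) (log (x + 1) ^ (-p) / (x + 1)) x := by
  have hlog : HasDerivAt (fun y => log (y + 1)) (1 / (x + 1)) x :=
    ((hasDerivAt_id x).add_const 1).log (by simp only [id]; linarith)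
  have hpow := ((hasDerivAt_rpow_const (p := 1 - p)
    (Or.inl (log_pos (by linarith : 1 < x + 1)).ne')).comp x hlog).div_const (1 - p)
  refine hpow.congr_deriv ?_
  rw [sub_sub_cancel_left]
  field_simp [sub_ne_zero.2 hp.symm]

theorem integrableOn_Ioi_log_add_one_rpow_neg_div {a p : ℝ} (ha : 0 < a) (hp : 1 < p) :
    IntegrableOn (fun x => log (x + 1) ^ (-p) / (x + 1)) (Ioi a) := by
  have hlog : Tendsto (fun y : ℝ => log (y + 1)) atTop atTop :=
    tendsto_log_atTop.comp (tendsto_atTop_add_const_right _ 1 tendsto_id)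
  have hlim : Tendsto (fun y => log (y + 1) ^ (1 - p) / (1 - p)) atTop (nhds 0) := by
    simpa using ((tendsto_rpow_neg_atTop (by linarith : 0 < p - 1)).comp hlog).div_const (1 - p)
  refine integrableOn_Ioi_deriv_of_nonneg'
    (fun x hx => hasDerivAt_log_add_one_rpow_div hp.ne' (ha.trans_le hx)) (fun x hx => ?_) hlim
  have hx : 0 < x := ha.trans hx
  exact div_nonneg (rpow_nonneg (log_nonneg (by linarith)) _) (by linarith)

theorem monotoneOn_mul_log_add_one_rpow {δ : ℝ} (hδ : 0 ≤ δ) :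
    MonotoneOn (fun t : ℝ => t * log (t + 1) ^ δ) (Ici 0) := by
  intro a (ha : 0 ≤ a) b (hb : 0 ≤ b) hab
  have hla : 0 ≤ log (a + 1) := log_nonneg (by linarith)
  exact mul_le_mul hab (rpow_le_rpow hla (log_le_log (by linarith) (by linarith)) hδ)
    (rpow_nonneg hla δ) hb

theorem sq_half_mul_rpow_le_integral_mul_log_add_one_rpow {δ s : ℝ} (hδ : 0 ≤ δ)
    (hs : 0 ≤ s) :
    (s / 2) ^ 2 * (log (s + 1) / 2) ^ δ ≤ ∫ t in (0 : ℝ)..s, t * log (t + 1) ^ δ := by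
  have hhalf : (s - s / 2) * ((s / 2) * log (s / 2 + 1) ^ δ) ≤
      ∫ t in (0 : ℝ)..s, t * log (t + 1) ^ δ :=
    ((monotoneOn_mul_log_add_one_rpow hδ).mono Icc_subset_Ici_self).sub_mul_le_intervalIntegral
      (by simp) (by linarith) (by linarith)
  have hlog : (log (s + 1) / 2) ^ δ ≤ log (s / 2 + 1) ^ δ :=
    rpow_le_rpow (div_nonneg (log_nonneg (by linarith)) two_pos.le)
      (by linarith [log_add_one_le_two_mul_log_half_add_one (by linarith : -1 < s)]) hδ
  calc (s / 2) ^ 2 * (log (s + 1) / 2) ^ δ ≤ (s / 2) ^ 2 * log (s / 2 + 1) ^ δ := by gcongr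
    _ = (s - s / 2) * ((s / 2) * log (s / 2 + 1) ^ δ) := by ring
    _ ≤ _ := hhalf

theorem integral_mul_log_add_one_rpow_rpow_neg_half_le {δ s : ℝ} (hδ : 0 ≤ δ)
    (hs : 1 ≤ s) :
    (∫ t in (0 : ℝ)..s, t * log (t + 1) ^ δ) ^ (-(1 / 2 : ℝ)) ≤
      4 * 2 ^ (δ / 2) * (log (s + 1) ^ (-(δ / 2)) / (s + 1)) := by
  set L := log (s + 1)
  have hL : 0 < L := log_pos (by linarith)
  have hm : 0 < (s / 2) ^ 2 * (L / 2) ^ δ := by positivity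
  calc (∫ t in (0 : ℝ)..s, t * log (t + 1) ^ δ) ^ (-(1 / 2 : ℝ))
      ≤ ((s / 2) ^ 2 * (L / 2) ^ δ) ^ (-(1 / 2 : ℝ)) :=
        rpow_le_rpow_of_nonpos hm
          (sq_half_mul_rpow_le_integral_mul_log_add_one_rpow hδ (by linarith)) (by norm_num)
    _ = (s / 2)⁻¹ * (2 ^ (δ / 2) * L ^ (-(δ / 2))) := by
        rw [mul_rpow (by positivity) (by positivity), ← rpow_natCast,
          ← rpow_mul (by positivity), ← rpow_mul (by positivity), div_rpow hL.le two_pos.le,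
          show (2 : ℕ) * -(1 / 2 : ℝ) = -1 by norm_num, show δ * -(1 / 2) = -(δ / 2) by ring,
          rpow_neg_one, rpow_neg two_pos.le, div_inv_eq_mul]
        ring
    _ ≤ 4 * 2 ^ (δ / 2) * (L ^ (-(δ / 2)) / (s + 1)) := by
        have hinv : (s / 2)⁻¹ ≤ 4 / (s + 1) := by
          rw [inv_div, div_le_div_iff₀ (by linarith) (by linarith)]
          linarith
        calc (s / 2)⁻¹ * (2 ^ (δ / 2) * L ^ (-(δ / 2)))
            ≤ 4 / (s + 1) * (2 ^ (δ / 2) * L ^ (-(δ / 2))) := by gcongr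
          _ = _ := by ring

theorem log_power_satisfies_keller_osserman (δ : ℝ) (hδ : 2 < δ) :
    let f : ℝ → ℝ := fun t => t * (Real.log (t + 1)) ^ δ
    f 0 = 0 ∧ (∀ t : ℝ, 0 < t → 0 < f t) ∧ (MonotoneOn f (Ici 0)) ∧
      IntegrableOn (fun s : ℝ => (∫ t in (0:ℝ)..s, f t) ^ (-(1/2 : ℝ))) (Ici 1) := by
  intro f
  have hδ0 : 0 ≤ δ := by linarith
  have hmono : MonotoneOn f (Ici 0) := monotoneOn_mul_log_add_one_rpow hδ0
  refine ⟨by simp [f], fun t ht => mul_pos ht (rpow_pos_of_pos (log_pos (by linarith)) δ),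
    hmono, ?_⟩
  have hF : MonotoneOn (fun s => ∫ t in (0 : ℝ)..s, f t) (Ici 0) :=
    hmono.monotoneOn_intervalIntegral (by simp [f])
  rw [integrableOn_Ici_iff_integrableOn_Ioi]
  refine Integrable.mono'
    ((integrableOn_Ioi_log_add_one_rpow_neg_div one_pos (by linarith : 1 < δ / 2)).const_mul
      (4 * 2 ^ (δ / 2)))
    ((aemeasurable_restrict_of_monotoneOn measurableSet_Ioi
      (hF.mono (Ioi_subset_Ici zero_le_one))).pow_const _).aestronglyMeasurable ?_
  filter_upwards [ae_restrict_mem measurableSet_Ioi] with s (hs : 1 < s)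
  have hFs : 0 ≤ ∫ t in (0 : ℝ)..s, f t := by
    simpa using hF self_mem_Ici (mem_Ici.2 (by linarith)) (by linarith)
  rw [norm_of_nonneg (rpow_nonneg hFs _)]
  exact integral_mul_log_add_one_rpow_rpow_neg_half_le hδ0 hs.le
end

section
/- Let 0 < m < 1 and set p = 2/(1−m) and A = (p(p−1))^{−1/(1−m)}. Define w : ℝ → ℝ by w(t) = 0 for t ≤ 0 and w(t) = A t^p for t ≥ 0. Then w is a C² function on ℝ, w ≥ 0, w is not constant, and w'' = w^m pointwise on ℝ. -/
open Real

lemma cont_piece (B c : ℝ) (hc : 0 < c) :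
    Continuous (fun t : ℝ => if t ≤ 0 then 0 else B * t ^ c) := by
  have heq : (fun t : ℝ => if t ≤ 0 then 0 else B * t ^ c)
      = fun t => B * (max t 0) ^ c := by
    funext t
    rcases le_or_gt t 0 with ht | ht
    · rw [if_pos ht, max_eq_right ht, Real.zero_rpow hc.ne', mul_zero]
    · rw [if_neg (not_le.2 ht), max_eq_left ht.le]
  rw [heq]
  exact continuous_const.mul
    ((continuous_id.max continuous_const).rpow_const fun x => Or.inr hc.le)

lemma deriv_piece (B c : ℝ) (hc : 1 < c) (t : ℝ) :
    HasDerivAt (fun t : ℝ => if t ≤ 0 then 0 else B * t ^ c)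
      (if t ≤ 0 then 0 else B * c * t ^ (c - 1)) t := by
  rcases lt_trichotomy t 0 with ht | rfl | ht
  · rw [if_pos ht.le]
    apply (hasDerivAt_const t (0:ℝ)).congr_of_eventuallyEq
    filter_upwards [Iio_mem_nhds ht] with x hx
    rw [if_pos hx.le]
  · simp only [le_refl, if_pos]
    rw [hasDerivAt_iff_tendsto_slope]
    have hc0 : (0:ℝ) < c - 1 := by linarith
    apply squeeze_zero_norm' (a := fun x => |B| * |x| ^ (c - 1))
    · filter_upwards [self_mem_nhdsWithin] with x hx
      rcases le_or_gt x 0 with h | h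
      · simp only [slope_def_field, if_pos h, if_pos le_rfl, sub_zero, zero_div,
          norm_zero]
        positivity
      · rw [slope_def_field, if_neg (not_le.2 h), if_pos le_rfl]
        rw [sub_zero, sub_zero, mul_div_assoc]
        have : x ^ c / x = x ^ (c - 1) := by
          rw [Real.rpow_sub h, Real.rpow_one]
        rw [this, norm_mul, Real.norm_eq_abs, Real.norm_eq_abs]
        exact mul_le_mul_of_nonneg_left (Real.abs_rpow_le_abs_rpow _ _) (abs_nonneg B)
    · have hcont : ContinuousAt (fun x : ℝ => |B| * |x| ^ (c - 1)) 0 :=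
        (continuous_const.mul
          ((continuous_abs.rpow_const fun x => Or.inr hc0.le))).continuousAt
      have h0 : |B| * |(0:ℝ)| ^ (c - 1) = 0 := by
        rw [abs_zero, Real.zero_rpow hc0.ne', mul_zero]
      have := hcont.tendsto.mono_left (nhdsWithin_le_nhds (s := {(0:ℝ)}ᶜ))
      rwa [h0] at this
  · rw [if_neg (not_le.2 ht)]
    have h1 : HasDerivAt (fun x : ℝ => B * x ^ c) (B * (c * t ^ (c - 1))) t :=
      (Real.hasDerivAt_rpow_const (Or.inl ht.ne')).const_mul B
    have h2 : HasDerivAt (fun t : ℝ => if t ≤ 0 then 0 else B * t ^ c)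
        (B * (c * t ^ (c - 1))) t := by
      apply h1.congr_of_eventuallyEq
      filter_upwards [Ioi_mem_nhds ht] with x hx
      rw [if_neg (not_le.2 hx)]
    convert h2 using 1
    ring

theorem compact_support_profile (m : ℝ) (hm0 : 0 < m) (hm1 : m < 1) :
    let p : ℝ := 2 / (1 - m)
    let A : ℝ := (p * (p - 1)) ^ (-(1 / (1 - m)))
    let w : ℝ → ℝ := fun t => if t ≤ 0 then 0 else A * t ^ p
    ContDiff ℝ 2 w ∧ (∀ t, 0 ≤ w t) ∧ (¬ ∃ c : ℝ, ∀ t, w t = c) ∧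
      (∀ t : ℝ, deriv (deriv w) t = w t ^ m) := by
  intro p A w
  have hm' : 0 < 1 - m := by linarith
  have hpdef : p = 2 / (1 - m) := rfl
  have hp2 : 2 < p := by
    rw [hpdef, lt_div_iff₀ hm']; nlinarith
  have hpp : 0 < p * (p - 1) := by nlinarith
  have hA : 0 < A := Real.rpow_pos_of_pos hpp _
  -- first derivative
  have hw1 : ∀ t, HasDerivAt w (if t ≤ 0 then 0 else A * p * t ^ (p - 1)) t := by
    intro t
    have h := deriv_piece A p (by linarith) t
    exact h
  have hdw : deriv w = fun t => if t ≤ 0 then 0 else A * p * t ^ (p - 1) :=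
    funext fun t => (hw1 t).deriv
  -- second derivative
  have hw2 : ∀ t, HasDerivAt (fun t : ℝ => if t ≤ 0 then 0 else A * p * t ^ (p - 1))
      (if t ≤ 0 then 0 else A * p * (p - 1) * t ^ (p - 2)) t := by
    intro t
    have h := deriv_piece (A * p) (p - 1) (by linarith) t
    have e1 : p - 1 - 1 = p - 2 := by ring
    rw [e1] at h
    exact h
  have hddw : deriv (deriv w) = fun t => if t ≤ 0 then 0 else A * p * (p - 1) * t ^ (p - 2) := by
    rw [hdw]; exact funext fun t => (hw2 t).deriv
  refine ⟨?_, ?_, ?_, ?_⟩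
  · -- ContDiff 2
    rw [show (2 : WithTop ℕ∞) = 1 + 1 from rfl, contDiff_succ_iff_deriv]
    refine ⟨fun t => (hw1 t).differentiableAt, by simp, ?_⟩
    rw [contDiff_one_iff_deriv, hdw]
    refine ⟨fun t => (hw2 t).differentiableAt, ?_⟩
    have : deriv (fun t : ℝ => if t ≤ 0 then 0 else A * p * t ^ (p - 1))
        = fun t => if t ≤ 0 then 0 else A * p * (p - 1) * t ^ (p - 2) :=
      funext fun t => (hw2 t).deriv
    rw [this]
    exact cont_piece _ _ (by linarith)
  · intro t
    rcases le_or_gt t 0 with ht | ht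
    · simp only [w, if_pos ht, le_refl]
    · simp only [w, if_neg (not_le.2 ht)]
      exact mul_nonneg hA.le (Real.rpow_nonneg ht.le _)
  · rintro ⟨c, hc⟩
    have h0 : (0:ℝ) = c := by simpa [w] using hc 0
    have h1 : A = c := by
      have h := hc 1
      simp only [w] at h
      rwa [if_neg (by norm_num : ¬(1:ℝ) ≤ 0), Real.one_rpow, mul_one] at h
    rw [← h0] at h1
    exact absurd h1 hA.ne'
  · intro t
    rw [hddw]
    rcases le_or_gt t 0 with ht | ht
    · simp only [if_pos ht, w]
      rw [Real.zero_rpow hm0.ne']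
    · simp only [if_neg (not_le.2 ht), w]
      have hpm : p * m = p - 2 := by
        rw [hpdef]; field_simp; ring
      have hakey : A * (p * (p - 1)) = A ^ m := by
        have hAdef : A = (p * (p - 1)) ^ (-(1 / (1 - m))) := rfl
        rw [hAdef, ← Real.rpow_mul hpp.le]
        nth_rewrite 2 [show p * (p - 1) = (p * (p - 1)) ^ (1:ℝ) from (Real.rpow_one _).symm]
        rw [← Real.rpow_add hpp]
        congr 1
        field_simp
        linarith
      rw [Real.mul_rpow hA.le (Real.rpow_nonneg ht.le _), ← Real.rpow_mul ht.le, hpm,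
        ← hakey]
      ring
end

section
/- Let N ≥ 1 and let u, v : ℝ^N → ℝ be smooth functions satisfying the system −Δu = h(x,u,v), −Δv = h(x,v,u) on ℝ^N, where h : ℝ^N × ℝ² → ℝ is continuous and satisfies h(x,v,u) − h(x,u,v) ≥ ν(u − v) for all u ≥ v and all x, with a constant ν > 0. If u and v are bounded (so in particular have at most polynomial growth), then u = v. -/
open Real

noncomputable def lap {N : ℕ} (u : EuclideanSpace ℝ (Fin N) → ℝ)
    (x : EuclideanSpace ℝ (Fin N)) : ℝ :=
  ∑ i : Fin N, fderiv ℝ (fun y => fderiv ℝ u y (EuclideanSpace.single i (1:ℝ))) x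
    (EuclideanSpace.single i (1:ℝ))

open Filter Set

section Aux

lemma second_deriv_test (g g' : ℝ → ℝ) (hg : ∀ t, HasDerivAt g (g' t) t)
    (a : ℝ) (hg' : HasDerivAt g' a 0) (hmax : IsLocalMax g 0) : a ≤ 0 := by
  by_contra hpos
  push_neg at hpos
  have h0 : g' 0 = 0 := hmax.hasDerivAt_eq_zero (hg 0)
  have hslope : Tendsto (slope g' 0) (nhdsWithin 0 {0}ᶜ) (nhds a) :=
    hasDerivAt_iff_tendsto_slope.mp hg'
  have hev : ∀ᶠ t in nhdsWithin 0 {0}ᶜ, 0 < slope g' 0 t :=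
    hslope.eventually (eventually_gt_nhds hpos)
  rw [eventually_nhdsWithin_iff, Metric.eventually_nhds_iff] at hev
  obtain ⟨δ, hδ, hball⟩ := hev
  have hgpos : ∀ t ∈ Ioo (0:ℝ) δ, 0 < g' t := by
    intro t ht
    have h1 : 0 < slope g' 0 t := by
      apply hball (y := t) (by rw [Real.dist_eq, sub_zero, abs_of_pos ht.1]; exact ht.2)
      simp [ne_of_gt ht.1]
    rw [slope_def_field] at h1
    have h2 : 0 < g' t / t := by
      simpa [div_sub_div_same, h0] using h1
    nlinarith [ht.1, mul_pos h2 ht.1, div_mul_cancel₀ (g' t) (ne_of_gt ht.1)]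
  have hmono : StrictMonoOn g (Icc 0 δ) := by
    apply strictMonoOn_of_deriv_pos (convex_Icc _ _)
      (fun t _ => (hg t).continuousAt.continuousWithinAt)
    intro t ht
    rw [interior_Icc] at ht
    rw [(hg t).deriv]
    exact hgpos t ht
  obtain ⟨δ₂, hδ₂, hb2⟩ := Metric.eventually_nhds_iff.mp hmax
  set t := min δ δ₂ / 2 with htdef
  have ht0 : 0 < t := by positivity
  have h1 : g 0 < g t := by
    apply hmono (left_mem_Icc.mpr hδ.le) _ ht0
    refine ⟨ht0.le, ?_⟩
    have := min_le_left δ δ₂; rw [htdef]; linarith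
  have h2 : g t ≤ g 0 := by
    apply hb2
    rw [Real.dist_eq, sub_zero, abs_of_pos ht0]
    have := min_le_right δ δ₂; rw [htdef]; linarith
  linarith

variable {N : ℕ}

lemma line_hasDerivAt (x₀ e : EuclideanSpace ℝ (Fin N)) (t : ℝ) :
    HasDerivAt (fun s : ℝ => x₀ + s • e) e t := by
  simpa using ((hasDerivAt_id t).smul_const e).const_add x₀

lemma dir_deriv1 (f : EuclideanSpace ℝ (Fin N) → ℝ) (hf : ContDiff ℝ (⊤ : ℕ∞) f)
    (x₀ e : EuclideanSpace ℝ (Fin N)) (t : ℝ) :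
    HasDerivAt (fun s => f (x₀ + s • e)) (fderiv ℝ f (x₀ + t • e) e) t :=
  (hf.differentiable (by simp) (x₀ + t • e)).hasFDerivAt.comp_hasDerivAt t
    (line_hasDerivAt x₀ e t)

lemma dir_deriv2 (f : EuclideanSpace ℝ (Fin N) → ℝ) (hf : ContDiff ℝ (⊤ : ℕ∞) f)
    (x₀ e : EuclideanSpace ℝ (Fin N)) :
    HasDerivAt (fun s : ℝ => fderiv ℝ f (x₀ + s • e) e)
      (fderiv ℝ (fun y => fderiv ℝ f y e) x₀ e) 0 := by
  have hφ : ContDiff ℝ (⊤ : ℕ∞) (fun y => fderiv ℝ f y e) :=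
    (ContDiff.fderiv_right (m := (⊤ : ℕ∞)) hf (by exact_mod_cast le_of_eq (top_add (1:ℕ∞)))).clm_apply contDiff_const
  have := (hφ.differentiable (by simp) (x₀ + (0:ℝ) • e)).hasFDerivAt.comp_hasDerivAt 0
    (line_hasDerivAt x₀ e 0)
  simpa [Function.comp_def] using this

lemma main_half (N : ℕ) (h : EuclideanSpace ℝ (Fin N) → ℝ → ℝ → ℝ) (ν : ℝ) (hν : 0 < ν)
    (hmono : ∀ x a b, b ≤ a → h x b a - h x a b ≥ ν * (a - b))
    (u v : EuclideanSpace ℝ (Fin N) → ℝ)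
    (hu : ContDiff ℝ (⊤ : ℕ∞) u) (hv : ContDiff ℝ (⊤ : ℕ∞) v)
    (hequ : ∀ x, -lap u x = h x (u x) (v x))
    (heqv : ∀ x, -lap v x = h x (v x) (u x))
    (hub : ∃ M, ∀ x, |u x| ≤ M) (hvb : ∃ M, ∀ x, |v x| ≤ M) :
    ∀ x, u x ≤ v x := by
  obtain ⟨Mu, hMu⟩ := hub
  obtain ⟨Mv, hMv⟩ := hvb
  set M : ℝ := Mu + Mv with hMdef
  have hMbd : ∀ y, |u y - v y| ≤ M := by
    intro y
    have := hMu y; have := hMv y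
    rw [hMdef]
    calc |u y - v y| ≤ |u y| + |v y| := abs_sub _ _
      _ ≤ Mu + Mv := by linarith
  have hM0 : 0 ≤ M := le_trans (abs_nonneg _) (hMbd 0)
  -- key quantitative estimate
  have key : ∀ ε : ℝ, 0 < ε → ∀ x, u x - v x ≤ 2*N*ε/ν + ε*‖x‖^2 := by
    intro ε hε x
    set w : EuclideanSpace ℝ (Fin N) → ℝ := fun y => u y - v y - ε*‖y‖^2 with hwdef
    have hwc : Continuous w :=
      (hu.continuous.sub hv.continuous).sub (continuous_const.mul (continuous_norm.pow 2))
    set R : ℝ := Real.sqrt ((2*M+1)/ε) with hRdef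
    have hR0 : 0 ≤ R := Real.sqrt_nonneg _
    have hR2 : ε * R^2 = 2*M+1 := by
      rw [hRdef, Real.sq_sqrt (by positivity)]
      field_simp
    obtain ⟨x₀, hx₀mem, hx₀max⟩ := (isCompact_closedBall (0 : EuclideanSpace ℝ (Fin N)) R).exists_isMaxOn
      ⟨0, by simp [hR0]⟩ hwc.continuousOn
    have hglobal : ∀ y, w y ≤ w x₀ := by
      intro y
      by_cases hy : y ∈ Metric.closedBall (0 : EuclideanSpace ℝ (Fin N)) R
      · exact hx₀max hy
      · have h1 : R < ‖y‖ := by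
          simpa [Metric.mem_closedBall, dist_zero_right] using hy
        have h2 : ε * R^2 ≤ ε * ‖y‖^2 :=
          mul_le_mul_of_nonneg_left (by nlinarith) hε.le
        have h3 : w y ≤ M - ε * ‖y‖^2 := by
          have := hMbd y
          rw [hwdef]; simp only
          cases abs_le.mp (hMbd y) with
          | intro hl hr => linarith
        have h4 : -M ≤ w 0 := by
          rw [hwdef]; simp only [norm_zero]
          cases abs_le.mp (hMbd 0) with
          | intro hl hr => nlinarith
        have h5 : w 0 ≤ w x₀ := hx₀max (by simp [hR0])
        nlinarith
    -- second derivative bound at x₀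
    have hlap : lap u x₀ - lap v x₀ ≤ 2*N*ε := by
      have keyi : ∀ i : Fin N,
          fderiv ℝ (fun y => fderiv ℝ u y (EuclideanSpace.single i (1:ℝ))) x₀
              (EuclideanSpace.single i (1:ℝ))
            - fderiv ℝ (fun y => fderiv ℝ v y (EuclideanSpace.single i (1:ℝ))) x₀
              (EuclideanSpace.single i (1:ℝ)) ≤ 2*ε := by
        intro i
        set e : EuclideanSpace ℝ (Fin N) := EuclideanSpace.single i (1:ℝ) with hedef
        have he : ‖e‖ = 1 := by rw [hedef]; simp [EuclideanSpace.norm_single]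
        set c : ℝ := inner ℝ x₀ e with hcdef
        set G : ℝ → ℝ := fun t => u (x₀+t•e) - v (x₀+t•e) - ε*(‖x₀‖^2 + 2*c*t + t^2)
          with hGdef
        have hnorm : ∀ t : ℝ, ‖x₀ + t•e‖^2 = ‖x₀‖^2 + 2*c*t + t^2 := by
          intro t
          rw [norm_add_sq_real, real_inner_smul_right, norm_smul, he, ← hcdef]
          rw [Real.norm_eq_abs]
          rw [mul_pow, sq_abs]
          ring
        have hGw : ∀ t, G t = w (x₀ + t•e) := by
          intro t
          rw [hGdef, hwdef]
          simp only
          rw [hnorm t]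
        have hGmax : IsLocalMax G 0 := by
          apply Filter.Eventually.of_forall
          intro t
          rw [hGw, hGw]
          have h0 : x₀ + (0:ℝ)•e = x₀ := by simp
          rw [h0]
          exact hglobal _
        set G' : ℝ → ℝ := fun t =>
          fderiv ℝ u (x₀+t•e) e - fderiv ℝ v (x₀+t•e) e - ε*(2*c + 2*t) with hG'def
        have hG' : ∀ t, HasDerivAt G (G' t) t := by
          intro t
          have hq : HasDerivAt (fun t : ℝ => ε*(‖x₀‖^2 + 2*c*t + t^2)) (ε*(2*c + 2*t)) t := by
            have h1 : HasDerivAt (fun t : ℝ => ‖x₀‖^2 + 2*c*t + t^2) (2*c + 2*t) t := by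
              have := (((hasDerivAt_id t).const_mul (2*c)).const_add (‖x₀‖^2)).add
                (hasDerivAt_pow 2 t)
              convert this using 1
              · rfl
              · rfl
              · ext; simp
              · simp
            exact h1.const_mul ε
          exact ((dir_deriv1 u hu x₀ e t).sub (dir_deriv1 v hv x₀ e t)).sub hq
        have hG'' : HasDerivAt G'
            (fderiv ℝ (fun y => fderiv ℝ u y e) x₀ e
              - fderiv ℝ (fun y => fderiv ℝ v y e) x₀ e - ε*2) 0 := by
          have hq : HasDerivAt (fun t : ℝ => ε*(2*c + 2*t)) (ε*2) 0 := by
            have h1 : HasDerivAt (fun t : ℝ => 2*c + 2*t) 2 0 := by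
              have := ((hasDerivAt_id (0:ℝ)).const_mul 2).const_add (2*c)
              convert this using 1
              · rfl
              · rfl
              · ext; simp
              · simp
            exact h1.const_mul ε
          exact ((dir_deriv2 u hu x₀ e).sub (dir_deriv2 v hv x₀ e)).sub hq
        have := second_deriv_test G G' hG' _ hG'' hGmax
        linarith
      have hsum : lap u x₀ - lap v x₀ =
          ∑ i : Fin N, (fderiv ℝ (fun y => fderiv ℝ u y (EuclideanSpace.single i (1:ℝ))) x₀
              (EuclideanSpace.single i (1:ℝ))
            - fderiv ℝ (fun y => fderiv ℝ v y (EuclideanSpace.single i (1:ℝ))) x₀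
              (EuclideanSpace.single i (1:ℝ))) := by
        rw [lap, lap, Finset.sum_sub_distrib]
      rw [hsum]
      calc ∑ i : Fin N, _ ≤ ∑ _i : Fin N, 2*ε := Finset.sum_le_sum (fun i _ => keyi i)
        _ = N * (2*ε) := by rw [Finset.sum_const, Finset.card_univ, Fintype.card_fin]; simp
        _ = 2*N*ε := by ring
    -- conclude estimate
    have hx₀bd : w x₀ ≤ 2*N*ε/ν := by
      by_cases hcase : u x₀ ≤ v x₀
      · have ha : w x₀ ≤ 0 := by
          rw [hwdef]; simp only; nlinarith [sq_nonneg ‖x₀‖]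
        have hb : (0:ℝ) ≤ 2*N*ε/ν := by positivity
        exact le_trans ha hb
      · push_neg at hcase
        have hm := hmono x₀ (u x₀) (v x₀) hcase.le
        rw [← hequ, ← heqv] at hm
        have h1 : ν * (u x₀ - v x₀) ≤ 2*N*ε := by linarith
        have h2 : u x₀ - v x₀ ≤ 2*N*ε/ν := by
          rw [le_div_iff₀ hν]; linarith
        rw [hwdef]; simp only; nlinarith [sq_nonneg ‖x₀‖]
    have := hglobal x
    rw [hwdef] at this
    simp only at this
    linarith
  -- take ε → 0
  intro x
  by_contra hlt
  push_neg at hlt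
  set d : ℝ := u x - v x with hddef
  have hd : 0 < d := by rw [hddef]; linarith
  set C : ℝ := 2*N/ν + ‖x‖^2 with hCdef
  have hC0 : 0 ≤ C := by rw [hCdef]; positivity
  set ε : ℝ := d/(2*(C+1)) with hεdef
  have hε : 0 < ε := by rw [hεdef]; positivity
  have hbd := key ε hε x
  have heq : 2*N*ε/ν + ε*‖x‖^2 = ε * C := by
    rw [hCdef]; field_simp
  rw [heq] at hbd
  have : d ≤ d/(2*(C+1)) * C := by rw [← hεdef]; linarith
  have hfrac : d/(2*(C+1)) * C < d := by
    rw [div_mul_eq_mul_div, div_lt_iff₀ (by positivity)]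
    nlinarith
  linarith

end Aux

theorem symmetry_linear_coercive (N : ℕ) (hN : 1 ≤ N)
    (h : EuclideanSpace ℝ (Fin N) → ℝ → ℝ → ℝ) (ν : ℝ) (hν : 0 < ν)
    (hcont : Continuous fun p : EuclideanSpace ℝ (Fin N) × ℝ × ℝ => h p.1 p.2.1 p.2.2)
    (hmono : ∀ x a b, b ≤ a → h x b a - h x a b ≥ ν * (a - b))
    (u v : EuclideanSpace ℝ (Fin N) → ℝ)
    (hu : ContDiff ℝ (⊤ : ℕ∞) u) (hv : ContDiff ℝ (⊤ : ℕ∞) v)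
    (hequ : ∀ x, -lap u x = h x (u x) (v x))
    (heqv : ∀ x, -lap v x = h x (v x) (u x))
    (hub : ∃ M, ∀ x, |u x| ≤ M) (hvb : ∃ M, ∀ x, |v x| ≤ M) :
    u = v := by
  funext x
  exact le_antisymm
    (main_half N h ν hν hmono u v hu hv hequ heqv hub hvb x)
    (main_half N h ν hν hmono v u hv hu heqv hequ hvb hub x)
end

section
/- Let ν > 0, C > 0, k ≥ 0, and let g : ℝ^N → [0, ∞) be a locally integrable function such that for all R > 1, ∫_{B_R} g ≤ (C/(ν R²)) ∫_{B_{2R}} g and ∫_{B_R} g ≤ C R^{N+k}. Then ∫_{ℝ^N} g = 0, i.e., g = 0 almost everywhere. -/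
open Real MeasureTheory Metric

theorem iteration_lemma (N : ℕ) (ν C k : ℝ) (hν : 0 < ν) (hC : 0 < C) (hk : 0 ≤ k)
    (g : EuclideanSpace ℝ (Fin N) → ℝ) (hg : ∀ x, 0 ≤ g x)
    (hloc : LocallyIntegrable g)
    (hdoubling : ∀ R : ℝ, 1 < R →
      ∫ x in Metric.ball (0 : EuclideanSpace ℝ (Fin N)) R, g x ≤
        (C / (ν * R ^ 2)) * ∫ x in Metric.ball (0 : EuclideanSpace ℝ (Fin N)) (2 * R), g x)
    (hgrowth : ∀ R : ℝ, 1 < R →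
      ∫ x in Metric.ball (0 : EuclideanSpace ℝ (Fin N)) R, g x ≤ C * R ^ ((N : ℝ) + k)) :
    (∫ x, g x) = 0 ∧ ∀ᵐ x, g x = 0 := by
  have hint : ∀ R : ℝ, IntegrableOn g (ball (0 : EuclideanSpace ℝ (Fin N)) R) := fun R =>
    (hloc.integrableOn_isCompact (isCompact_closedBall 0 R)).mono_set ball_subset_closedBall
  have hInonneg : ∀ R : ℝ, 0 ≤ ∫ x in ball (0 : EuclideanSpace ℝ (Fin N)) R, g x := fun R =>
    setIntegral_nonneg measurableSet_ball fun x _ => hg x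
  -- decay estimate by iterating the doubling inequality
  have key : ∀ ℓ : ℕ, ∃ C' : ℝ, 0 < C' ∧ ∀ R : ℝ, 1 < R →
      (∫ x in ball (0 : EuclideanSpace ℝ (Fin N)) R, g x) ≤ C' * R ^ ((N : ℝ) + k - 2 * ℓ) := by
    intro ℓ
    induction ℓ with
    | zero =>
      exact ⟨C, hC, fun R hR => by simpa using hgrowth R hR⟩
    | succ ℓ ih =>
      obtain ⟨C', hC', hbound⟩ := ih
      refine ⟨C * C' * 2 ^ ((N : ℝ) + k - 2 * ℓ) / ν, by positivity, fun R hR => ?_⟩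
      have hR0 : (0 : ℝ) < R := lt_trans one_pos hR
      have h2R : (1 : ℝ) < 2 * R := by linarith
      have hfac : (0 : ℝ) ≤ C / (ν * R ^ 2) := by positivity
      have hcast : ((N : ℝ) + k - 2 * ((ℓ : ℕ) + 1 : ℕ)) = ((N : ℝ) + k - 2 * ℓ) - 2 := by
        push_cast; ring
      rw [hcast]
      calc ∫ x in ball (0 : EuclideanSpace ℝ (Fin N)) R, g x
          ≤ (C / (ν * R ^ 2)) * ∫ x in ball (0 : EuclideanSpace ℝ (Fin N)) (2 * R), g x :=
            hdoubling R hR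
        _ ≤ (C / (ν * R ^ 2)) * (C' * (2 * R) ^ ((N : ℝ) + k - 2 * ℓ)) :=
            mul_le_mul_of_nonneg_left (hbound (2 * R) h2R) hfac
        _ = C * C' * 2 ^ ((N : ℝ) + k - 2 * ℓ) / ν * R ^ (((N : ℝ) + k - 2 * ℓ) - 2) := by
            have hsplit : R ^ (((N : ℝ) + k - 2 * ℓ) - 2) =
                R ^ ((N : ℝ) + k - 2 * (ℓ:ℝ)) / R ^ (2:ℝ) := Real.rpow_sub hR0 _ _
            rw [Real.mul_rpow (by norm_num : (0:ℝ) ≤ 2) hR0.le, hsplit, Real.rpow_two]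
            field_simp
  -- choose ℓ so the exponent is ≤ -1
  obtain ⟨C', hC', hbound⟩ := key ⌈((N : ℝ) + k + 1) / 2⌉₊
  set e : ℝ := (N : ℝ) + k - 2 * (⌈((N : ℝ) + k + 1) / 2⌉₊ : ℝ) with he
  have hele : e ≤ -1 := by
    have := Nat.le_ceil (((N : ℝ) + k + 1) / 2)
    rw [he]
    nlinarith [this]
  -- every ball has zero integral
  have hzero : ∀ R₀ : ℝ, (∫ x in ball (0 : EuclideanSpace ℝ (Fin N)) R₀, g x) = 0 := by
    intro R₀
    refine le_antisymm ?_ (hInonneg R₀)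
    by_contra hpos
    push_neg at hpos
    set t := ∫ x in ball (0 : EuclideanSpace ℝ (Fin N)) R₀, g x with ht
    set R : ℝ := max (R₀ + 1) (2 + 2 * C' / t) with hRdef
    have hR1 : 1 < R := by
      have h1 : 0 < 2 * C' / t := by positivity
      have : (2 : ℝ) + 2 * C' / t ≤ R := le_max_right _ _
      linarith
    have hRR₀ : R₀ ≤ R := le_trans (by linarith) (le_max_left _ _)
    have hmono : t ≤ ∫ x in ball (0 : EuclideanSpace ℝ (Fin N)) R, g x := by
      refine setIntegral_mono_set (hint R) (Filter.Eventually.of_forall fun x => hg x) ?_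
      exact (ball_subset_ball hRR₀).eventuallyLE
    have h1 : t ≤ C' * R ^ e := le_trans hmono (hbound R hR1)
    have h2 : R ^ e ≤ R ^ (-1 : ℝ) := Real.rpow_le_rpow_of_exponent_le hR1.le hele
    have h3 : t ≤ C' / R := by
      have := mul_le_mul_of_nonneg_left h2 hC'.le
      rw [Real.rpow_neg_one] at this
      calc t ≤ C' * R ^ e := h1
        _ ≤ C' * R⁻¹ := this
        _ = C' / R := by ring
    have hRbig : 2 * C' / t ≤ R := le_trans (by linarith) (le_max_right _ _)
    have hR0 : (0 : ℝ) < R := by linarith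
    have : C' / R ≤ t / 2 := by
      rw [div_le_div_iff₀ hR0 (by norm_num : (0:ℝ) < 2)]
      have h5 : t * (2 * C' / t) = 2 * C' := by field_simp
      have h6 := mul_le_mul_of_nonneg_left hRbig hpos.le
      rw [h5] at h6
      linarith
    linarith
  -- conclude g = 0 a.e.
  have hae : ∀ᵐ x, g x = 0 := by
    have hball : ∀ n : ℕ, ∀ᵐ x, x ∈ ball (0 : EuclideanSpace ℝ (Fin N)) (n : ℝ) → g x = 0 := by
      intro n
      have h0 : g =ᵐ[volume.restrict (ball (0 : EuclideanSpace ℝ (Fin N)) (n : ℝ))] 0 := by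
        refine (integral_eq_zero_iff_of_nonneg_ae ?_ ?_).mp (hzero n)
        · exact Filter.Eventually.of_forall fun x => hg x
        · exact hint n
      exact (ae_restrict_iff' measurableSet_ball).mp h0
    have hall : ∀ᵐ x, ∀ n : ℕ, x ∈ ball (0 : EuclideanSpace ℝ (Fin N)) (n : ℝ) → g x = 0 :=
      ae_all_iff.mpr hball
    filter_upwards [hall] with x hx
    obtain ⟨n, hn⟩ := exists_nat_gt ‖x‖
    exact hx n (by simpa [mem_ball, dist_zero_right] using hn)
  exact ⟨integral_eq_zero_of_ae hae, hae⟩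
end

section
/- Let u, v ∈ C²(ℝ^N) solve the system −Δu = β u^s v^{s+γ} − λ u^{2s+γ}, −Δv = β v^s u^{s+γ} − λ v^{2s+γ} with u, v ≥ 0, s ≥ 0, γ ≥ 1, β ≥ 0, λ ≥ λ₀ > 0. Suppose additionally u and v are bounded. Then u = v. -/
open Real

open Filter Set Topology

/-! The difference `ψ = u - v` satisfies `Δψ ≥ λ₀ ψ ^ (2s+γ)` wherever `ψ > 0`: the cross terms
have the right sign, and `t ↦ t ^ q` is superadditive for `q ≥ 1`. A bounded-above `C²`
function with this property is nonpositive: `ψ - ε ‖x‖²` attains its maximum at some `x₀`,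
where `Δψ(x₀) ≤ 2Nε`, whence `ψ ≤ (2Nε/λ₀) ^ (1/q) + ε ‖x‖²`; let `ε → 0`.
Exchanging `u` and `v` gives `u = v`. -/

theorem ContDiff.differentiable_fderiv_apply {𝕜 E F : Type*} [NontriviallyNormedField 𝕜]
    [NormedAddCommGroup E] [NormedSpace 𝕜 E] [NormedAddCommGroup F] [NormedSpace 𝕜 F]
    {f : E → F} (hf : ContDiff 𝕜 2 f) (e : E) : Differentiable 𝕜 (fun y => fderiv 𝕜 f y e) :=
  ((hf.fderiv_right (by norm_num : (1 : WithTop ℕ∞) + 1 ≤ 2)).differentiable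
    (by norm_num)).clm_apply (differentiable_const e)

/-- By the second-derivative test, `deriv (deriv f) x₀ > 0` would make `x₀` also a local
minimum, so `f` would be locally constant. -/
theorem deriv_deriv_nonpos_of_isLocalMax {f : ℝ → ℝ} {x₀ : ℝ} (h : IsLocalMax f x₀)
    (hc : ContinuousAt f x₀) : deriv (deriv f) x₀ ≤ 0 := by
  by_contra! hpos
  have hmin := isLocalMin_of_deriv_deriv_pos hpos h.deriv_eq_zero hc
  have hconst : f =ᶠ[𝓝 x₀] fun _ => f x₀ :=
    (h.and hmin).mono fun _ hy => le_antisymm hy.1 hy.2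
  have : deriv (deriv f) x₀ = 0 := by
    rw [(hconst.deriv.trans (Eventually.of_forall fun _ => deriv_const _ _)).deriv_eq,
      deriv_const]
  exact hpos.ne' this

theorem fderiv_fderiv_apply_nonpos_of_isLocalMax {E : Type*} [NormedAddCommGroup E]
    [NormedSpace ℝ E] {φ : E → ℝ} (hφ : ContDiff ℝ 2 φ) {x₀ : E} (h : IsLocalMax φ x₀)
    (e : E) : fderiv ℝ (fun y => fderiv ℝ φ y e) x₀ e ≤ 0 := by
  have hφd : Differentiable ℝ φ := hφ.differentiable (by norm_num)
  let ℓ : ℝ → E := fun t => x₀ + t • e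
  have hℓ : ∀ t, HasDerivAt ℓ e t := fun t => by
    simpa only [one_smul] using ((hasDerivAt_id' t).smul_const e).const_add x₀
  have hℓ0 : ℓ 0 = x₀ := by simp [ℓ]
  have hderiv : deriv (φ ∘ ℓ) = fun t => fderiv ℝ φ (ℓ t) e := funext fun t =>
    ((hφd _).hasFDerivAt.comp_hasDerivAt t (hℓ t)).deriv
  have hderiv2 : deriv (deriv (φ ∘ ℓ)) 0 = fderiv ℝ (fun y => fderiv ℝ φ y e) x₀ e := by
    rw [hderiv, ← hℓ0]
    exact ((hφ.differentiable_fderiv_apply e _).hasFDerivAt.comp_hasDerivAt (0 : ℝ) (hℓ 0)).deriv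
  rw [← hderiv2]
  exact deriv_deriv_nonpos_of_isLocalMax ((hℓ0.symm ▸ h).comp_continuous (hℓ 0).continuousAt)
    (hφd.continuous.continuousAt.comp (hℓ 0).continuousAt)

theorem tendsto_sub_mul_norm_sq_cocompact_atBot {E : Type*} [NormedAddCommGroup E]
    [ProperSpace E] {f : E → ℝ} (hf : BddAbove (range f)) {ε : ℝ} (hε : 0 < ε) :
    Tendsto (fun y => f y - ε * ‖y‖ ^ 2) (cocompact E) atBot := by
  obtain ⟨M, hM⟩ := hf
  have hnorm : Tendsto (fun y : E => ε * ‖y‖ ^ 2) (cocompact E) atTop :=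
    ((tendsto_pow_atTop two_ne_zero).comp tendsto_norm_cocompact_atTop).const_mul_atTop hε
  refine tendsto_atBot_mono (fun y => ?_)
    (tendsto_atBot_add_const_left _ M (tendsto_neg_atTop_atBot.comp hnorm))
  have := hM (mem_range_self y)
  simp only [Function.comp_apply]
  linarith

section Laplacian

variable {N : ℕ}

theorem lap_sub {u v : EuclideanSpace ℝ (Fin N) → ℝ} (hu : ContDiff ℝ 2 u)
    (hv : ContDiff ℝ 2 v) (x : EuclideanSpace ℝ (Fin N)) :
    lap (u - v) x = lap u x - lap v x := by
  simp only [lap, ← Finset.sum_sub_distrib]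
  refine Finset.sum_congr rfl fun i _ => ?_
  have hsub : (fun y => fderiv ℝ (u - v) y (EuclideanSpace.single i 1)) =
      (fun y => fderiv ℝ u y (EuclideanSpace.single i 1)) -
        (fun y => fderiv ℝ v y (EuclideanSpace.single i 1)) := by
    ext y
    rw [fderiv_sub (hu.differentiable two_ne_zero y) (hv.differentiable two_ne_zero y)]
    rfl
  rw [hsub, fderiv_sub (hu.differentiable_fderiv_apply _ x) (hv.differentiable_fderiv_apply _ x)]
  rfl

theorem lap_const_mul_norm_sq (c : ℝ) (x : EuclideanSpace ℝ (Fin N)) :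
    lap (fun y => c * ‖y‖ ^ 2) x = 2 * N * c := by
  have h : ∀ i : Fin N, (fun y => fderiv ℝ (fun z : EuclideanSpace ℝ (Fin N) => c * ‖z‖ ^ 2) y
      (EuclideanSpace.single i 1)) = fun y => 2 * c * y i := by
    intro i
    ext y
    rw [fderiv_const_mul ((contDiff_norm_sq ℝ (n := 1)).differentiable one_ne_zero y),
      fderiv_norm_sq_apply]
    simp [EuclideanSpace.inner_single_right]
    ring
  have h2 : ∀ i : Fin N, fderiv ℝ (fun y : EuclideanSpace ℝ (Fin N) => 2 * c * y i) x
      (EuclideanSpace.single i 1) = 2 * c := fun i => by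
    have hd : HasFDerivAt (fun y : EuclideanSpace ℝ (Fin N) => 2 * c * y i)
        ((2 * c) • EuclideanSpace.proj i) x :=
      (EuclideanSpace.proj (𝕜 := ℝ) i).hasFDerivAt.const_mul (2 * c)
    simp [hd.fderiv]
  simp only [lap, h, h2, Finset.sum_const, Finset.card_univ, Fintype.card_fin, nsmul_eq_mul]
  ring

theorem lap_nonpos_of_isLocalMax {φ : EuclideanSpace ℝ (Fin N) → ℝ} (hφ : ContDiff ℝ 2 φ)
    {x : EuclideanSpace ℝ (Fin N)} (h : IsLocalMax φ x) : lap φ x ≤ 0 :=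
  Finset.sum_nonpos fun _ _ => fderiv_fderiv_apply_nonpos_of_isLocalMax hφ h _

theorem lap_le_of_forall_sub_mul_norm_sq_le {ψ : EuclideanSpace ℝ (Fin N) → ℝ}
    (hψ : ContDiff ℝ 2 ψ) {ε : ℝ} {x₀ : EuclideanSpace ℝ (Fin N)}
    (hmax : ∀ y, ψ y - ε * ‖y‖ ^ 2 ≤ ψ x₀ - ε * ‖x₀‖ ^ 2) : lap ψ x₀ ≤ 2 * N * ε := by
  have hquad : ContDiff ℝ 2 (fun y : EuclideanSpace ℝ (Fin N) => ε * ‖y‖ ^ 2) :=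
    contDiff_const.mul (contDiff_norm_sq ℝ)
  have := lap_nonpos_of_isLocalMax (φ := ψ - fun y => ε * ‖y‖ ^ 2) (hψ.sub hquad)
    (Eventually.of_forall hmax)
  rw [lap_sub hψ hquad, lap_const_mul_norm_sq] at this
  linarith

theorem nonpos_of_mul_rpow_le_lap {ψ : EuclideanSpace ℝ (Fin N) → ℝ} {c q : ℝ}
    (hψ : ContDiff ℝ 2 ψ) (hbdd : BddAbove (range ψ)) (hc : 0 < c) (hq : 0 < q)
    (hlap : ∀ x, 0 < ψ x → c * ψ x ^ q ≤ lap ψ x) (y : EuclideanSpace ℝ (Fin N)) :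
    ψ y ≤ 0 := by
  have hbound : ∀ ε > 0, ψ y ≤ (2 * N * ε / c) ^ q⁻¹ + ε * ‖y‖ ^ 2 := by
    intro ε hε
    obtain ⟨x₀, hx₀⟩ := Continuous.exists_forall_ge (f := fun y => ψ y - ε * ‖y‖ ^ 2)
      (by fun_prop) (tendsto_sub_mul_norm_sq_cocompact_atBot hbdd hε)
    have hx₀le : ψ x₀ ≤ (2 * N * ε / c) ^ q⁻¹ := by
      rcases le_or_gt (ψ x₀) 0 with hneg | hpos
      · exact hneg.trans (by positivity)
      · rw [Real.le_rpow_inv_iff_of_pos hpos.le (by positivity) hq, le_div_iff₀' hc]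
        exact (hlap x₀ hpos).trans (lap_le_of_forall_sub_mul_norm_sq_le hψ hx₀)
    linarith [hx₀ y, mul_nonneg hε.le (sq_nonneg ‖x₀‖)]
  have hlim : Tendsto (fun ε => (2 * N * ε / c) ^ q⁻¹ + ε * ‖y‖ ^ 2) (𝓝[>] 0) (𝓝 0) := by
    have h0 : Tendsto (fun ε : ℝ => ε) (𝓝 0) (𝓝 0) := tendsto_id
    have := (((h0.const_mul (2 * N : ℝ)).div_const c).rpow_const
      (Or.inr (inv_nonneg.2 hq.le))).add (h0.mul_const (‖y‖ ^ 2))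
    simpa [Real.zero_rpow (inv_ne_zero hq.ne')] using this.mono_left nhdsWithin_le_nhds
  exact ge_of_tendsto hlim (eventually_nhdsWithin_of_forall hbound)

end Laplacian

theorem mul_rpow_sub_le_reaction_sub {s γ β lam lam₀ a b : ℝ} (hs : 0 ≤ s) (hγ : 1 ≤ γ)
    (hβ : 0 ≤ β) (hlam₀ : 0 ≤ lam₀) (hlam : lam₀ ≤ lam) (hb : 0 ≤ b) (hba : b ≤ a) :
    lam₀ * (a - b) ^ (2 * s + γ) ≤
      (lam * a ^ (2 * s + γ) - β * a ^ s * b ^ (s + γ)) -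
        (lam * b ^ (2 * s + γ) - β * b ^ s * a ^ (s + γ)) := by
  have ha : 0 ≤ a := hb.trans hba
  have hcross : a ^ s * b ^ (s + γ) ≤ b ^ s * a ^ (s + γ) := by
    rw [rpow_add' hb (by linarith), rpow_add' ha (by linarith), ← mul_assoc, ← mul_assoc,
      mul_comm (a ^ s)]
    exact mul_le_mul_of_nonneg_left (rpow_le_rpow hb hba (by linarith)) (by positivity)
  have hsuper : (a - b) ^ (2 * s + γ) + b ^ (2 * s + γ) ≤ a ^ (2 * s + γ) := by
    simpa using add_rpow_le_rpow_add (sub_nonneg.2 hba) hb (by linarith : 1 ≤ 2 * s + γ)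
  calc lam₀ * (a - b) ^ (2 * s + γ)
      ≤ lam * (a - b) ^ (2 * s + γ) := by gcongr
    _ ≤ lam * (a ^ (2 * s + γ) - b ^ (2 * s + γ)) :=
      mul_le_mul_of_nonneg_left (by linarith) (hlam₀.trans hlam)
    _ ≤ _ := by linarith [mul_le_mul_of_nonneg_left hcross hβ]

theorem le_of_boseEinstein_system {N : ℕ} {s γ β lam lam₀ : ℝ} (hs : 0 ≤ s) (hγ : 1 ≤ γ)
    (hβ : 0 ≤ β) (hlam₀ : 0 < lam₀) (hlam : lam₀ ≤ lam) {u v : EuclideanSpace ℝ (Fin N) → ℝ}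
    (hu : ContDiff ℝ 2 u) (hv : ContDiff ℝ 2 v) (hvpos : ∀ x, 0 ≤ v x)
    (hub : BddAbove (range u))
    (hequ : ∀ x, -lap u x = β * u x ^ s * v x ^ (s + γ) - lam * u x ^ (2 * s + γ))
    (heqv : ∀ x, -lap v x = β * v x ^ s * u x ^ (s + γ) - lam * v x ^ (2 * s + γ)) :
    u ≤ v := by
  have hbdd : BddAbove (range (u - v)) := by
    obtain ⟨M, hM⟩ := hub
    exact ⟨M, forall_mem_range.2 fun x =>
      (sub_le_self _ (hvpos x)).trans (hM (mem_range_self x))⟩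
  have hlap : ∀ x, 0 < (u - v) x → lam₀ * (u - v) x ^ (2 * s + γ) ≤ lap (u - v) x := by
    intro x hx
    rw [Pi.sub_apply, sub_pos] at hx
    rw [lap_sub hu hv, Pi.sub_apply]
    have := mul_rpow_sub_le_reaction_sub hs hγ hβ hlam₀.le hlam (hvpos x) hx.le
    linarith [hequ x, heqv x]
  exact fun x => sub_nonpos.1 <|
    nonpos_of_mul_rpow_le_lap (hu.sub hv) hbdd hlam₀ (by linarith) hlap x

theorem symmetry_of_components_BE_general (N : ℕ) (s γ β lam lam₀ : ℝ)
    (hs : 0 ≤ s) (hγ : 1 ≤ γ) (hβ : 0 ≤ β) (hlam₀ : 0 < lam₀) (hlam : lam₀ ≤ lam)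
    (u v : EuclideanSpace ℝ (Fin N) → ℝ)
    (hu : ContDiff ℝ 2 u) (hv : ContDiff ℝ 2 v)
    (hupos : ∀ x, 0 ≤ u x) (hvpos : ∀ x, 0 ≤ v x)
    (hub : ∃ M, ∀ x, |u x| ≤ M) (hvb : ∃ M, ∀ x, |v x| ≤ M)
    (hequ : ∀ x, -lap u x = β * u x ^ s * v x ^ (s + γ) - lam * u x ^ (2 * s + γ))
    (heqv : ∀ x, -lap v x = β * v x ^ s * u x ^ (s + γ) - lam * v x ^ (2 * s + γ)) :
    u = v := by
  have hbdd : ∀ w : EuclideanSpace ℝ (Fin N) → ℝ, (∃ M, ∀ x, |w x| ≤ M) → BddAbove (range w) :=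
    fun w ⟨M, hM⟩ => ⟨M, forall_mem_range.2 fun x => (le_abs_self _).trans (hM x)⟩
  exact le_antisymm
    (le_of_boseEinstein_system hs hγ hβ hlam₀ hlam hu hv hvpos (hbdd u hub) hequ heqv)
    (le_of_boseEinstein_system hs hγ hβ hlam₀ hlam hv hu hupos (hbdd v hvb) heqv hequ)

theorem symmetry_of_components_BE (N : ℕ) (hN : 1 ≤ N) (s γ β lam lam₀ : ℝ)
    (hs : 0 ≤ s) (hγ : 1 ≤ γ) (hβ : 0 ≤ β) (hlam₀ : 0 < lam₀) (hlam : lam₀ ≤ lam)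
    (u v : EuclideanSpace ℝ (Fin N) → ℝ)
    (hu : ContDiff ℝ 2 u) (hv : ContDiff ℝ 2 v)
    (hupos : ∀ x, 0 ≤ u x) (hvpos : ∀ x, 0 ≤ v x)
    (hub : ∃ M, ∀ x, |u x| ≤ M) (hvb : ∃ M, ∀ x, |v x| ≤ M)
    (hequ : ∀ x, -lap u x = β * u x ^ s * v x ^ (s + γ) - lam * u x ^ (2 * s + γ))
    (heqv : ∀ x, -lap v x = β * v x ^ s * u x ^ (s + γ) - lam * v x ^ (2 * s + γ)) :
    u = v :=
  symmetry_of_components_BE_general N s γ β lam lam₀ hs hγ hβ hlam₀ hlam u v hu hv hupos hvpos hub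
    hvb hequ heqv
end

section
/- Let N ≥ 1 and let u, v ∈ C²(ℝ^N) be a non-negative bounded solution of −Δu = β u^s v^{s+γ} − λ u^{2s+γ}, −Δv = β v^s u^{s+γ} − λ v^{2s+γ} with s ≥ 0, γ ≥ 1, 0 ≤ β < λ. Then u = v = 0. -/
/-!
Adding the two equations and using the rearrangement inequality
`uˢ vˢ⁺ᵞ + vˢ uˢ⁺ᵞ ≤ u²ˢ⁺ᵞ + v²ˢ⁺ᵞ` (with `β ≥ 0`) and then convexity of `t ↦ tᵖ`, the sum
`w = u + v` satisfies `Δw ≥ c wᵖ` with `c > 0` and `p = 2s + γ ≥ 1`. A bounded non-negative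
such `w` vanishes: at a maximum point `x₀` of `w - ε‖x‖²` one has `c w(x₀)ᵖ ≤ Δw(x₀) ≤ 2Nε`,
hence `w(x) ≤ (2Nε/c)^(1/p) + ε‖x‖²` for every `x`, and `ε → 0` gives `w = 0`.
-/

open Real

open Filter Topology Laplacian InnerProductSpace

theorem rpow_mul_rpow_add_rpow_mul_rpow_le {a b s t : ℝ} (ha : 0 ≤ a) (hb : 0 ≤ b) (hs : 0 ≤ s)
    (ht : 0 ≤ t) : a ^ s * b ^ t + b ^ s * a ^ t ≤ a ^ (s + t) + b ^ (s + t) := by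
  have hsame_sign : 0 ≤ (a ^ s - b ^ s) * (a ^ t - b ^ t) := by
    rcases le_total a b with hab | hab
    · exact mul_nonneg_of_nonpos_of_nonpos (sub_nonpos.2 (rpow_le_rpow ha hab hs))
        (sub_nonpos.2 (rpow_le_rpow ha hab ht))
    · exact mul_nonneg (sub_nonneg.2 (rpow_le_rpow hb hab hs))
        (sub_nonneg.2 (rpow_le_rpow hb hab ht))
  rw [rpow_add_of_nonneg ha hs ht, rpow_add_of_nonneg hb hs ht]
  linarith

theorem Real.rpow_add_le_mul_rpow_add_rpow {a b p : ℝ} (ha : 0 ≤ a) (hb : 0 ≤ b) (hp : 1 ≤ p) :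
    (a + b) ^ p ≤ 2 ^ (p - 1) * (a ^ p + b ^ p) := by
  lift a to NNReal using ha
  lift b to NNReal using hb
  exact_mod_cast NNReal.rpow_add_le_mul_rpow_add_rpow a b hp

theorem deriv_deriv_nonpos_of_isLocalMax_s14 {g : ℝ → ℝ} {t : ℝ} (hmax : IsLocalMax g t)
    (hc : ContinuousAt g t) : deriv (deriv g) t ≤ 0 := by
  by_contra! hpos
  have hmin : IsLocalMin g t := isLocalMin_of_deriv_deriv_pos hpos hmax.deriv_eq_zero hc
  have hconst : g =ᶠ[𝓝 t] fun _ => g t :=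
    (hmin.and hmax).mono fun _ hy => le_antisymm hy.2 hy.1
  have hzero : deriv (deriv g) t = 0 := by
    rw [hconst.deriv.deriv_eq]
    simp
  exact hpos.ne' hzero

section Laplacian

variable {E : Type*} [NormedAddCommGroup E] [InnerProductSpace ℝ E]

theorem iteratedFDeriv_two_apply_self_nonpos_of_isLocalMax {f : E → ℝ} {x : E}
    (hf : ContDiff ℝ 2 f) (hmax : IsLocalMax f x) (e : E) :
    iteratedFDeriv ℝ 2 f x ![e, e] ≤ 0 := by
  have hline : ∀ t : ℝ, HasDerivAt (fun t : ℝ => x + t • e) e t := fun t => by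
    simpa using ((hasDerivAt_id t).smul_const e).const_add x
  have hderiv : deriv (fun t : ℝ => f (x + t • e)) = fun t => fderiv ℝ f (x + t • e) e :=
    funext fun t =>
      ((hf.differentiable (by norm_num) _).hasFDerivAt.comp_hasDerivAt t (hline t)).deriv
  have hderiv2 : deriv (deriv fun t : ℝ => f (x + t • e)) 0 = fderiv ℝ (fderiv ℝ f) x e e := by
    have hfd : ContDiff ℝ 1 (fderiv ℝ f) := hf.fderiv_right (by norm_num)
    have := ((hfd.differentiable one_ne_zero _).hasFDerivAt.clm_apply
      (hasFDerivAt_const e _)).comp_hasDerivAt (0 : ℝ) (hline 0)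
    rw [hderiv]
    simpa [Function.comp_def] using this.deriv
  rw [iteratedFDeriv_two_apply]
  simp only [Matrix.cons_val_zero, Matrix.cons_val_one]
  rw [← hderiv2]
  have hcont : Continuous fun t : ℝ => x + t • e := by fun_prop
  refine deriv_deriv_nonpos_of_isLocalMax_s14 ?_ (hf.continuous.comp hcont).continuousAt
  exact IsLocalMax.comp_continuous (g := fun t : ℝ => x + t • e) (b := 0) (by simpa using hmax)
    hcont.continuousAt

variable [FiniteDimensional ℝ E]

theorem laplacian_nonpos_of_isLocalMax {f : E → ℝ} {x : E} (hf : ContDiff ℝ 2 f)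
    (hmax : IsLocalMax f x) : Δ f x ≤ 0 := by
  rw [laplacian_eq_iteratedFDeriv_stdOrthonormalBasis]
  exact Finset.sum_nonpos fun i _ => iteratedFDeriv_two_apply_self_nonpos_of_isLocalMax hf hmax _

theorem laplacian_norm_sq (x : E) :
    Δ (fun y : E => ‖y‖ ^ 2) x = 2 * Module.finrank ℝ E := by
  have hfd : fderiv ℝ (fun y : E => ‖y‖ ^ 2) = fun y => 2 • innerSL ℝ y :=
    funext fun y => (hasStrictFDerivAt_norm_sq y).hasFDerivAt.fderiv
  have hfd2 : fderiv ℝ (fderiv ℝ (fun y : E => ‖y‖ ^ 2)) x = 2 • innerSL ℝ := by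
    rw [hfd]
    exact ((innerSL ℝ).hasFDerivAt.const_smul 2).fderiv
  have hb (i : _) : innerSL ℝ (stdOrthonormalBasis ℝ E i) (stdOrthonormalBasis ℝ E i) = 1 :=
    (stdOrthonormalBasis ℝ E).inner_eq_one i
  simp [laplacian_eq_iteratedFDeriv_stdOrthonormalBasis, iteratedFDeriv_two_apply, hfd2, hb,
    mul_comm]

theorem exists_forall_sub_mul_norm_sq_le {f : E → ℝ} (hf : Continuous f)
    (hbdd : BddAbove (Set.range f)) {ε : ℝ} (hε : 0 < ε) :
    ∃ x₀, ∀ y, f y - ε * ‖y‖ ^ 2 ≤ f x₀ - ε * ‖x₀‖ ^ 2 := by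
  obtain ⟨M, hM⟩ := hbdd
  refine (hf.sub (continuous_const.mul (continuous_norm.pow 2))).exists_forall_ge ?_
  have hq : Tendsto (fun y : E => ε * ‖y‖ ^ 2) (cocompact E) atTop :=
    ((tendsto_pow_atTop two_ne_zero).comp tendsto_norm_cocompact_atTop).const_mul_atTop hε
  refine tendsto_atBot_mono (fun y => ?_)
    (tendsto_atBot_add_const_left _ M (tendsto_neg_atTop_atBot.comp hq))
  have := hM (Set.mem_range_self y)
  simp only [Function.comp_apply, Pi.sub_apply, Pi.mul_apply, Pi.pow_apply]
  linarith

theorem eq_zero_of_mul_rpow_le_laplacian {w : E → ℝ} (hw : ContDiff ℝ 2 w) (hw0 : ∀ x, 0 ≤ w x)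
    (hbdd : BddAbove (Set.range w)) {c p : ℝ} (hc : 0 < c) (hp : 0 < p)
    (hΔ : ∀ x, c * w x ^ p ≤ Δ w x) : w = 0 := by
  set n : ℝ := (Module.finrank ℝ E : ℝ)
  have hbound : ∀ ε > 0, ∀ x, w x ≤ (2 * n * ε / c) ^ p⁻¹ + ε * ‖x‖ ^ 2 := by
    intro ε hε x
    obtain ⟨x₀, hx₀⟩ := exists_forall_sub_mul_norm_sq_le hw.continuous hbdd hε
    have hq : ContDiff ℝ 2 (fun y : E => ‖y‖ ^ 2) := contDiff_norm_sq ℝ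
    have hεq : ContDiff ℝ 2 (ε • fun y : E => ‖y‖ ^ 2) := hq.const_smul ε
    have hmax : IsLocalMax (w - ε • fun y => ‖y‖ ^ 2) x₀ :=
      Eventually.of_forall fun y => by simpa using hx₀ y
    have hΔx₀ : Δ w x₀ ≤ 2 * n * ε := by
      have := laplacian_nonpos_of_isLocalMax (f := w - ε • fun y : E => ‖y‖ ^ 2) (hw.sub hεq) hmax
      rw [hw.contDiffAt.laplacian_sub hεq.contDiffAt, laplacian_smul ε hq.contDiffAt,
        laplacian_norm_sq, smul_eq_mul] at this
      linarith
    have hwx₀ : w x₀ ≤ (2 * n * ε / c) ^ p⁻¹ := by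
      rw [le_rpow_inv_iff_of_pos (hw0 x₀) (by positivity) hp, le_div_iff₀' hc]
      linarith [hΔ x₀]
    nlinarith [hx₀ x, sq_nonneg ‖x₀‖]
  funext x
  refine le_antisymm ?_ (hw0 x)
  have hlim : Tendsto (fun ε => (2 * n * ε / c) ^ p⁻¹ + ε * ‖x‖ ^ 2) (𝓝[>] 0) (𝓝 0) := by
    have : ContinuousAt (fun ε : ℝ => (2 * n * ε / c) ^ p⁻¹ + ε * ‖x‖ ^ 2) 0 :=
      (((continuousAt_const.mul continuousAt_id).div_const c).rpow_const
        (Or.inr (inv_nonneg.2 hp.le))).add (continuousAt_id.mul continuousAt_const)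
    simpa [zero_rpow (inv_ne_zero hp.ne')] using this.tendsto.mono_left nhdsWithin_le_nhds
  exact ge_of_tendsto hlim (eventually_nhdsWithin_of_forall fun ε hε => hbound ε hε x)

end Laplacian

theorem lap_eq_laplacian {N : ℕ} {f : EuclideanSpace ℝ (Fin N) → ℝ}
    {x : EuclideanSpace ℝ (Fin N)} (hf : ContDiffAt ℝ 2 f x) : lap f x = Δ f x := by
  have hdf : DifferentiableAt ℝ (fderiv ℝ f) x :=
    (hf.fderiv_right (m := 1) (by norm_num)).differentiableAt one_ne_zero
  rw [laplacian_eq_iteratedFDeriv_orthonormalBasis f (EuclideanSpace.basisFun (Fin N) ℝ)]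
  simp [lap, iteratedFDeriv_two_apply, fderiv_clm_apply hdf (differentiableAt_const _)]

theorem liouville_BE_subcritical_coupling_general (N : ℕ) (s γ β lam : ℝ)
    (hs : 0 ≤ s) (hγ : 1 ≤ γ) (hβ0 : 0 ≤ β) (hβ : β < lam)
    (u v : EuclideanSpace ℝ (Fin N) → ℝ)
    (hu : ContDiff ℝ 2 u) (hv : ContDiff ℝ 2 v)
    (hupos : ∀ x, 0 ≤ u x) (hvpos : ∀ x, 0 ≤ v x)
    (hub : ∃ M, ∀ x, |u x| ≤ M) (hvb : ∃ M, ∀ x, |v x| ≤ M)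
    (hequ : ∀ x, -lap u x = β * u x ^ s * v x ^ (s + γ) - lam * u x ^ (2 * s + γ))
    (heqv : ∀ x, -lap v x = β * v x ^ s * u x ^ (s + γ) - lam * v x ^ (2 * s + γ)) :
    u = 0 ∧ v = 0 := by
  have hp : 1 ≤ 2 * s + γ := by linarith
  have hΔ_sum : ∀ x, (lam - β) * (u x ^ (2 * s + γ) + v x ^ (2 * s + γ)) ≤ Δ (u + v) x := by
    intro x
    have hrearr := rpow_mul_rpow_add_rpow_mul_rpow_le (hupos x) (hvpos x) hs
      (by linarith : 0 ≤ s + γ)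
    rw [show s + (s + γ) = 2 * s + γ by ring] at hrearr
    rw [hu.contDiffAt.laplacian_add hv.contDiffAt, ← lap_eq_laplacian hu.contDiffAt,
      ← lap_eq_laplacian hv.contDiffAt]
    nlinarith [hequ x, heqv x, mul_le_mul_of_nonneg_left hrearr hβ0]
  have hΔ_rpow : ∀ x, (lam - β) / 2 ^ (2 * s + γ - 1) * (u + v) x ^ (2 * s + γ) ≤ Δ (u + v) x :=
    fun x => calc
      (lam - β) / 2 ^ (2 * s + γ - 1) * (u x + v x) ^ (2 * s + γ)
        ≤ (lam - β) / 2 ^ (2 * s + γ - 1) *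
            (2 ^ (2 * s + γ - 1) * (u x ^ (2 * s + γ) + v x ^ (2 * s + γ))) := by
          gcongr
          exact Real.rpow_add_le_mul_rpow_add_rpow (hupos x) (hvpos x) hp
      _ = (lam - β) * (u x ^ (2 * s + γ) + v x ^ (2 * s + γ)) := by field_simp
      _ ≤ Δ (u + v) x := hΔ_sum x
  obtain ⟨Mu, hMu⟩ := hub
  obtain ⟨Mv, hMv⟩ := hvb
  have hbdd : BddAbove (Set.range (u + v)) := ⟨Mu + Mv, Set.forall_mem_range.2 fun x =>
    add_le_add ((le_abs_self _).trans (hMu x)) ((le_abs_self _).trans (hMv x))⟩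
  have hsum_zero : ∀ x, u x + v x = 0 := congrFun <|
    eq_zero_of_mul_rpow_le_laplacian (hu.add hv) (fun x => add_nonneg (hupos x) (hvpos x)) hbdd
      (div_pos (sub_pos.2 hβ) (by positivity)) (by linarith) hΔ_rpow
  exact ⟨funext fun x => show u x = 0 by linarith [hupos x, hvpos x, hsum_zero x],
    funext fun x => show v x = 0 by linarith [hupos x, hvpos x, hsum_zero x]⟩

theorem liouville_BE_subcritical_coupling (N : ℕ) (hN : 1 ≤ N) (s γ β lam : ℝ)
    (hs : 0 ≤ s) (hγ : 1 ≤ γ) (hβ0 : 0 ≤ β) (hβ : β < lam)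
    (u v : EuclideanSpace ℝ (Fin N) → ℝ)
    (hu : ContDiff ℝ 2 u) (hv : ContDiff ℝ 2 v)
    (hupos : ∀ x, 0 ≤ u x) (hvpos : ∀ x, 0 ≤ v x)
    (hub : ∃ M, ∀ x, |u x| ≤ M) (hvb : ∃ M, ∀ x, |v x| ≤ M)
    (hequ : ∀ x, -lap u x = β * u x ^ s * v x ^ (s + γ) - lam * u x ^ (2 * s + γ))
    (heqv : ∀ x, -lap v x = β * v x ^ s * u x ^ (s + γ) - lam * v x ^ (2 * s + γ)) :
    u = 0 ∧ v = 0 :=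
  liouville_BE_subcritical_coupling_general N s γ β lam hs hγ hβ0 hβ u v hu hv hupos hvpos hub hvb
    hequ heqv
end
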